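/- arXiv:2504.10211 — 5 statements merged into one kernel-verified Lean document; each statement's English description precedes it below -/
import Mathlib

section
/- Let Q be a real n×n matrix, A a real n×n matrix with QA + AᵀQ = 0, and D a polynomial with real coefficients such that D(-A) is invertible. Then the matrix B = D(-A)⁻¹·D(A) satisfies BᵀQB = Q. -/
open Matrix Polynomial

lemma aux_pow {n : ℕ} (Q A : Matrix (Fin n) (Fin n) ℝ)
    (hA : Q * A + Aᵀ * Q = 0) (k : ℕ) : Q * A ^ k = ((-A)ᵀ) ^ k * Q := by
  induction k with
  | zero => simp
  | succ k ih =>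
    have h1 : Q * A = (-A)ᵀ * Q := by
      have := hA
      rw [add_eq_zero_iff_eq_neg] at this
      simp [this, transpose_neg]
    rw [pow_succ, ← mul_assoc, ih, mul_assoc, h1, ← mul_assoc, ← pow_succ]

lemma aux_poly {n : ℕ} (Q A : Matrix (Fin n) (Fin n) ℝ)
    (hA : Q * A + Aᵀ * Q = 0) (D : Polynomial ℝ) :
    Q * aeval A D = (aeval (-A) D)ᵀ * Q := by
  induction D using Polynomial.induction_on' with
  | add p q hp hq => simp [mul_add, add_mul, hp, hq, transpose_add]
  | monomial k c =>
    simp only [aeval_monomial, algebraMap_smul]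
    rw [Algebra.algebraMap_eq_smul_one, smul_mul_assoc, one_mul,
      smul_mul_assoc, one_mul, transpose_smul, Matrix.mul_smul, aux_pow Q A hA k,
      smul_mul_assoc, transpose_pow]

/-- If `QA + AᵀQ = 0` and `D(-A)` is invertible, then `B = D(-A)⁻¹ D(A)`
satisfies `Bᵀ Q B = Q`. -/
theorem stmt2 {n : ℕ} (Q A : Matrix (Fin n) (Fin n) ℝ)
    (hA : Q * A + Aᵀ * Q = 0) (D : Polynomial ℝ)
    (hD : IsUnit (aeval (-A) D)) :
    ((aeval (-A) D)⁻¹ * aeval A D)ᵀ * Q * ((aeval (-A) D)⁻¹ * aeval A D) = Q := by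
  set M := aeval (-A) D with hM
  set N := aeval A D with hN
  have hA' : Q * (-A) + (-A)ᵀ * Q = 0 := by
    rw [show Q * (-A) + (-A)ᵀ * Q = -(Q * A + Aᵀ * Q) by simp [transpose_neg]; abel, hA, neg_zero]
  -- key identities
  have key1 : Q * N = Mᵀ * Q := aux_poly Q A hA D
  have key2 : Q * M = Nᵀ * Q := by
    have := aux_poly Q (-A) hA' D
    simpa using this
  -- invertibility
  have hdet : IsUnit M.det := (Matrix.isUnit_iff_isUnit_det M).mp hD
  have hMM : M * M⁻¹ = 1 := Matrix.mul_nonsing_inv M hdet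
  have hMM' : M⁻¹ * M = 1 := Matrix.nonsing_inv_mul M hdet
  -- M and N commute
  have hcomm : M * N = N * M := by
    have : Commute M N := by
      have h1 : M = aeval A (D.comp (-X)) := by
        rw [aeval_comp]; simp [hM]
      rw [h1, hN]
      exact (Commute.all (D.comp (-X)) D).map (aeval A).toRingHom
    exact this
  have hcomm' : M⁻¹ * N = N * M⁻¹ := by
    calc M⁻¹ * N = M⁻¹ * N * (M * M⁻¹) := by rw [hMM, mul_one]
    _ = M⁻¹ * (N * M) * M⁻¹ := by noncomm_ring
    _ = M⁻¹ * (M * N) * M⁻¹ := by rw [hcomm]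
    _ = (M⁻¹ * M) * (N * M⁻¹) := by noncomm_ring
    _ = N * M⁻¹ := by rw [hMM', one_mul]
  have hTinv : (M⁻¹)ᵀ = (Mᵀ)⁻¹ := Matrix.transpose_nonsing_inv M
  have hMTdet : IsUnit Mᵀ.det := by rwa [Matrix.det_transpose]
  have hMTinv : (Mᵀ)⁻¹ * Mᵀ = 1 := Matrix.nonsing_inv_mul Mᵀ hMTdet
  calc (M⁻¹ * N)ᵀ * Q * (M⁻¹ * N)
      = Nᵀ * ((M⁻¹)ᵀ * Q) * (N * M⁻¹) := by rw [transpose_mul, hcomm']; noncomm_ring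
    _ = Nᵀ * (Mᵀ)⁻¹ * (Q * N) * M⁻¹ := by rw [hTinv]; noncomm_ring
    _ = Nᵀ * ((Mᵀ)⁻¹ * Mᵀ) * Q * M⁻¹ := by rw [key1]; noncomm_ring
    _ = Nᵀ * Q * M⁻¹ := by rw [hMTinv, mul_one]
    _ = Q * (M * M⁻¹) := by rw [← key2]; noncomm_ring
    _ = Q := by rw [hMM, mul_one]
end

section
/- Let Q be a real symmetric positive definite n×n matrix and A a real n×n matrix with QA + AᵀQ = 0. Then the matrix I - (1/2)A is invertible, and the first diagonal Padé approximant R₁(A) = (I - (1/2)A)⁻¹(I + (1/2)A) satisfies R₁(A)ᵀ Q R₁(A) = Q. -/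
/-!
Write `B = 1 - A/2` and `C = 1 + A/2`. Since `QA` is skew-symmetric, `vᵀQAv = 0` for every `v`;
so `Bv = 0` would give `vᵀQv = vᵀQAv/2 = 0`, forcing `v = 0`, and `B` is invertible. Expanding,
`BᵀQB = Q + AᵀQA/4 = CᵀQC`, the cross terms being `∓(QA + AᵀQ)/2 = 0`. As `B` and `C` commute,
`R₁(A) = B⁻¹C = CB⁻¹`, hence `R₁(A)ᵀQR₁(A) = B⁻ᵀ(CᵀQC)B⁻¹ = B⁻ᵀ(BᵀQB)B⁻¹ = Q`.
-/

open Matrix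

variable {n R : Type*} [Fintype n]

theorem Matrix.dotProduct_mulVec_self_eq_zero_of_transpose_eq_neg
    [CommRing R] [IsAddTorsionFree R] {M : Matrix n n R} (hM : Mᵀ = -M) (v : n → R) :
    v ⬝ᵥ (M *ᵥ v) = 0 := by
  refine self_eq_neg.mp ?_
  conv_lhs => rw [dotProduct_mulVec, ← mulVec_transpose, hM, neg_mulVec, neg_dotProduct,
    dotProduct_comm]

variable [DecidableEq n]

section CommRing

variable [CommRing R]

theorem Matrix.commute_one_sub_smul_one_add_smul (A : Matrix n n R) (c : R) :
    Commute (1 - c • A) (1 + c • A) :=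
  (Commute.one_left _).sub_left
    ((Commute.one_right _).add_right (((Commute.refl A).smul_left c).smul_right c))

theorem Matrix.transpose_mul_mul_one_sub_smul {Q A : Matrix n n R} (hA : Q * A + Aᵀ * Q = 0)
    (c : R) : (1 - c • A)ᵀ * Q * (1 - c • A) = (1 + c • A)ᵀ * Q * (1 + c • A) := by
  rw [← sub_eq_zero]
  calc (1 - c • A)ᵀ * Q * (1 - c • A) - (1 + c • A)ᵀ * Q * (1 + c • A)
      = (-2 * c) • (Q * A + Aᵀ * Q) := by
        simp only [transpose_sub, transpose_add, transpose_smul, transpose_one, sub_mul, mul_sub,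
          add_mul, mul_add, one_mul, mul_one, smul_mul_assoc, mul_smul_comm]
        module
    _ = 0 := by rw [hA, smul_zero]

theorem Matrix.transpose_mul_mul_inv_mul_of_commute {Q B C : Matrix n n R} (hB : IsUnit B)
    (hBC : Commute B C) (h : Bᵀ * Q * B = Cᵀ * Q * C) : (B⁻¹ * C)ᵀ * Q * (B⁻¹ * C) = Q := by
  have hdet : IsUnit B.det := (isUnit_iff_isUnit_det B).mp hB
  have hinv : B⁻¹ * C = C * B⁻¹ := by
    obtain ⟨u, rfl⟩ := hB
    rw [← coe_units_inv]
    exact (Commute.units_inv_left hBC).eq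
  calc (B⁻¹ * C)ᵀ * Q * (B⁻¹ * C) = B⁻¹ᵀ * (Cᵀ * Q * C) * B⁻¹ := by
        rw [hinv, transpose_mul]; simp only [mul_assoc]
    _ = (B * B⁻¹)ᵀ * Q * (B * B⁻¹) := by rw [← h, transpose_mul]; simp only [mul_assoc]
    _ = Q := by rw [mul_nonsing_inv B hdet, transpose_one, one_mul, mul_one]

end CommRing

theorem Matrix.isUnit_one_sub_smul_of_posDef {Q A : Matrix n n ℝ} (hQ : Q.PosDef)
    (hA : Q * A + Aᵀ * Q = 0) (c : ℝ) : IsUnit (1 - c • A) := by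
  have hskew : (Q * A)ᵀ = -(Q * A) := by
    rw [transpose_mul, (isHermitian_iff_isSymm.mp hQ.1).eq, eq_neg_of_add_eq_zero_right hA]
  rw [isUnit_iff_isUnit_det, isUnit_iff_ne_zero]
  intro hdet
  obtain ⟨v, hv, hBv⟩ := exists_mulVec_eq_zero_iff.mpr hdet
  have hv_eq : v = c • (A *ᵥ v) := by
    rwa [sub_mulVec, one_mulVec, smul_mulVec, sub_eq_zero] at hBv
  have hzero : v ⬝ᵥ (Q *ᵥ v) = 0 := by
    nth_rewrite 2 [hv_eq]
    rw [mulVec_smul, mulVec_mulVec, dotProduct_smul,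
      dotProduct_mulVec_self_eq_zero_of_transpose_eq_neg hskew, smul_zero]
  simpa [hzero] using hQ.dotProduct_mulVec_pos hv

/-- For `Q` symmetric positive definite and `QA + AᵀQ = 0`, the matrix
`I - (1/2)A` is invertible and `R₁(A) = (I - A/2)⁻¹ (I + A/2)` satisfies
`R₁(A)ᵀ Q R₁(A) = Q`. -/
theorem stmt4 {n : ℕ} (Q A : Matrix (Fin n) (Fin n) ℝ)
    (hQ : Q.PosDef) (hA : Q * A + Aᵀ * Q = 0) :
    IsUnit (1 - (1/2 : ℝ) • A) ∧
    ((1 - (1/2 : ℝ) • A)⁻¹ * (1 + (1/2 : ℝ) • A))ᵀ * Q *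
      ((1 - (1/2 : ℝ) • A)⁻¹ * (1 + (1/2 : ℝ) • A)) = Q := by
  have hB := isUnit_one_sub_smul_of_posDef hQ hA (1 / 2)
  exact ⟨hB, transpose_mul_mul_inv_mul_of_commute hB (commute_one_sub_smul_one_add_smul A _)
    (transpose_mul_mul_one_sub_smul hA _)⟩
end

section
/- Let Q be a real symmetric positive definite n×n matrix. The first diagonal Padé approximation R₁(A) = (I - A/2)⁻¹(I + A/2) is globally Lipschitz continuous on g_Q = {A : QA + AᵀQ = 0} with Lipschitz constant 1 with respect to the matrix operator norm induced by the Q-norm. -/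
/-!
`g_Q` consists of the matrices `S` that are skew-adjoint with respect to `Q`. For such `S` the
cross terms in `‖(1 - S) v‖_Q²` cancel, so `‖(1 - S) v‖_Q² = ‖v‖_Q² + ‖S v‖_Q² ≥ ‖v‖_Q²`: the
matrix `1 - S` is invertible and its inverse is a contraction for the `Q`-norm. Since
`R₁(A) = 2 (1 - A/2)⁻¹ - 1`, the difference `R₁(A) - R₁(B) = (1 - A/2)⁻¹ (A - B) (1 - B/2)⁻¹`
has `Q`-operator norm at most `‖A - B‖_Q`.
-/

open Matrix

/-- The `Q`-norm of a vector, `‖x‖_Q = √(xᵀ Q x)`. -/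
noncomputable def qnorm {n : ℕ} (Q : Matrix (Fin n) (Fin n) ℝ) (x : Fin n → ℝ) : ℝ :=
  Real.sqrt (x ⬝ᵥ Q.mulVec x)

/-- The operator norm on `ℝ^{n×n}` induced by the `Q`-norm. -/
noncomputable def qOpNorm {n : ℕ} (Q M : Matrix (Fin n) (Fin n) ℝ) : ℝ :=
  sInf {c : ℝ | 0 ≤ c ∧ ∀ x : Fin n → ℝ, qnorm Q (M.mulVec x) ≤ c * qnorm Q x}

/-- The first diagonal Padé approximant `R₁(A) = (I - A/2)⁻¹ (I + A/2)`. -/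
noncomputable def pade1 {n : ℕ} (A : Matrix (Fin n) (Fin n) ℝ) : Matrix (Fin n) (Fin n) ℝ :=
  (1 - (1/2 : ℝ) • A)⁻¹ * (1 + (1/2 : ℝ) • A)

section SkewAdjoint

variable {ι R : Type*} [Fintype ι] [CommRing R] {Q S : Matrix ι ι R}

theorem Matrix.isSkewAdjoint_iff_mul_add_transpose_mul_eq_zero :
    Q.IsSkewAdjoint S ↔ Q * S + Sᵀ * Q = 0 := by
  rw [Matrix.IsSkewAdjoint, Matrix.IsAdjointPair, Matrix.mul_neg, eq_neg_iff_add_eq_zero,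
    add_comm]

theorem Matrix.IsSkewAdjoint.smul (hS : Q.IsSkewAdjoint S) (c : R) :
    Q.IsSkewAdjoint (c • S) := by
  rw [Matrix.IsSkewAdjoint, Matrix.IsAdjointPair, transpose_smul, Matrix.smul_mul, hS,
    Matrix.mul_neg, Matrix.mul_neg, Matrix.mul_smul, smul_neg]

theorem Matrix.IsSkewAdjoint.mulVec_dotProduct_mulVec (hS : Q.IsSkewAdjoint S) (v : ι → R) :
    (S *ᵥ v) ⬝ᵥ Q *ᵥ v = -(v ⬝ᵥ Q *ᵥ (S *ᵥ v)) := by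
  have h : (S *ᵥ v) ⬝ᵥ Q *ᵥ v = v ⬝ᵥ (Sᵀ * Q) *ᵥ v := by
    rw [dotProduct_mulVec, dotProduct_mulVec, ← vecMul_vecMul, ← vecMul_transpose]
  rw [h, hS, Matrix.mul_neg, neg_mulVec, dotProduct_neg, mulVec_mulVec]

end SkewAdjoint

section QNorm

variable {n : ℕ} {Q : Matrix (Fin n) (Fin n) ℝ}

theorem qnorm_nonneg (Q : Matrix (Fin n) (Fin n) ℝ) (x : Fin n → ℝ) : 0 ≤ qnorm Q x :=
  Real.sqrt_nonneg _

theorem exists_qnorm_mulVec_le (hQ : Q.PosDef) (M : Matrix (Fin n) (Fin n) ℝ) :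
    ∃ c, 0 ≤ c ∧ ∀ x, qnorm Q (M *ᵥ x) ≤ c * qnorm Q x := by
  have bound_of_finiteDimensional {E : Type} [NormedAddCommGroup E] [NormedSpace ℝ E]
      [FiniteDimensional ℝ E] (f : E →ₗ[ℝ] E) : ∃ c, 0 < c ∧ ∀ x, ‖f x‖ ≤ c * ‖x‖ :=
    (LinearMap.toContinuousLinearMap f).bound
  -- `Fin n → ℝ` already carries the sup norm, so the `Q`-norm structure is passed explicitly.
  let normQ := Q.toNormedAddCommGroup hQ
  obtain ⟨c, hc, hbound⟩ := @bound_of_finiteDimensional _ normQ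
    (Q.toInnerProductSpace hQ.posSemidef).toNormedSpace _ M.mulVecLin
  have hnorm (y : Fin n → ℝ) : @norm _ normQ.toNorm y = qnorm Q y :=
    congrArg Real.sqrt (dotProduct_comm (Q *ᵥ y) y)
  refine ⟨c, hc.le, fun x => ?_⟩
  have h := hbound x
  rwa [hnorm, hnorm] at h

theorem qnorm_mulVec_le_qOpNorm_mul (hQ : Q.PosDef) (M : Matrix (Fin n) (Fin n) ℝ)
    (x : Fin n → ℝ) : qnorm Q (M *ᵥ x) ≤ qOpNorm Q M * qnorm Q x := by
  obtain ⟨c, hc, hbound⟩ := exists_qnorm_mulVec_le hQ M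
  rcases (qnorm_nonneg Q x).eq_or_lt with hx | hx
  · simpa [← hx] using hbound x
  · rw [← div_le_iff₀ hx]
    exact le_csInf ⟨c, hc, hbound⟩ fun d hd => (div_le_iff₀ hx).2 (hd.2 x)

theorem qOpNorm_nonneg (Q M : Matrix (Fin n) (Fin n) ℝ) : 0 ≤ qOpNorm Q M :=
  Real.sInf_nonneg fun _ hc => hc.1

theorem qOpNorm_le_of_forall {M : Matrix (Fin n) (Fin n) ℝ} {c : ℝ} (hc : 0 ≤ c)
    (h : ∀ x, qnorm Q (M *ᵥ x) ≤ c * qnorm Q x) : qOpNorm Q M ≤ c :=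
  csInf_le ⟨0, fun _ hc => hc.1⟩ ⟨hc, h⟩

theorem qnorm_le_qnorm_one_sub_mulVec (hQ : Q.PosSemidef) {S : Matrix (Fin n) (Fin n) ℝ}
    (hS : Q.IsSkewAdjoint S) (v : Fin n → ℝ) : qnorm Q v ≤ qnorm Q ((1 - S) *ᵥ v) := by
  have hSv : 0 ≤ (S *ᵥ v) ⬝ᵥ Q *ᵥ (S *ᵥ v) := by
    simpa using hQ.dotProduct_mulVec_nonneg (S *ᵥ v)
  have hcross := hS.mulVec_dotProduct_mulVec v
  apply Real.sqrt_le_sqrt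
  rw [sub_mulVec, one_mulVec, mulVec_sub, dotProduct_sub, sub_dotProduct, sub_dotProduct]
  linarith

theorem isUnit_one_sub_of_isSkewAdjoint (hQ : Q.PosDef) {S : Matrix (Fin n) (Fin n) ℝ}
    (hS : Q.IsSkewAdjoint S) : IsUnit (1 - S) := by
  rw [isUnit_iff_isUnit_det, isUnit_iff_ne_zero]
  intro hdet
  obtain ⟨v, hv, hv0⟩ := exists_mulVec_eq_zero_iff.2 hdet
  have hpos : 0 < qnorm Q v := Real.sqrt_pos.2 (by simpa using hQ.dotProduct_mulVec_pos hv)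
  have hle := qnorm_le_qnorm_one_sub_mulVec hQ.posSemidef hS v
  simp only [hv0, qnorm, mulVec_zero, dotProduct_zero, Real.sqrt_zero] at hle
  exact hle.not_gt hpos

theorem qnorm_inv_one_sub_mulVec_le (hQ : Q.PosDef) {S : Matrix (Fin n) (Fin n) ℝ}
    (hS : Q.IsSkewAdjoint S) (z : Fin n → ℝ) : qnorm Q ((1 - S)⁻¹ *ᵥ z) ≤ qnorm Q z := by
  have hunit := (isUnit_iff_isUnit_det _).1 (isUnit_one_sub_of_isSkewAdjoint hQ hS)
  have h := qnorm_le_qnorm_one_sub_mulVec hQ.posSemidef hS ((1 - S)⁻¹ *ᵥ z)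
  rwa [mulVec_mulVec, mul_nonsing_inv _ hunit, one_mulVec] at h

end QNorm

section Pade

variable {n : ℕ}

theorem pade1_eq_two_smul_inv_sub_one {A : Matrix (Fin n) (Fin n) ℝ}
    (hA : IsUnit (1 - (1/2 : ℝ) • A)) : pade1 A = (2 : ℝ) • (1 - (1/2 : ℝ) • A)⁻¹ - 1 := by
  have h : 1 + (1/2 : ℝ) • A = (2 : ℝ) • 1 - (1 - (1/2 : ℝ) • A) := by module
  rw [pade1, h, Matrix.mul_sub, mul_smul_comm, Matrix.mul_one,
    nonsing_inv_mul _ ((isUnit_iff_isUnit_det _).1 hA)]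

theorem pade1_sub_pade1 {A B : Matrix (Fin n) (Fin n) ℝ} (hA : IsUnit (1 - (1/2 : ℝ) • A))
    (hB : IsUnit (1 - (1/2 : ℝ) • B)) :
    pade1 A - pade1 B = (1 - (1/2 : ℝ) • A)⁻¹ * (A - B) * (1 - (1/2 : ℝ) • B)⁻¹ := by
  have h : (2 : ℝ) • ((1 - (1/2 : ℝ) • B) - (1 - (1/2 : ℝ) • A)) = A - B := by module
  rw [pade1_eq_two_smul_inv_sub_one hA, pade1_eq_two_smul_inv_sub_one hB,
    sub_sub_sub_cancel_right, ← smul_sub, inv_sub_inv (iff_of_true hA hB), ← h, mul_smul_comm,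
    smul_mul_assoc]

end Pade

/-- `R₁` is globally Lipschitz on `g_Q` with Lipschitz constant `1` with respect
to the operator norm induced by the `Q`-norm. -/
theorem stmt8 {n : ℕ} (Q A B : Matrix (Fin n) (Fin n) ℝ)
    (hQ : Q.PosDef) (hA : Q * A + Aᵀ * Q = 0) (hB : Q * B + Bᵀ * Q = 0) :
    qOpNorm Q (pade1 A - pade1 B) ≤ 1 * qOpNorm Q (A - B) := by
  have hA' := (isSkewAdjoint_iff_mul_add_transpose_mul_eq_zero.2 hA).smul (1/2 : ℝ)
  have hB' := (isSkewAdjoint_iff_mul_add_transpose_mul_eq_zero.2 hB).smul (1/2 : ℝ)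
  rw [one_mul, pade1_sub_pade1 (isUnit_one_sub_of_isSkewAdjoint hQ hA')
    (isUnit_one_sub_of_isSkewAdjoint hQ hB')]
  refine qOpNorm_le_of_forall (qOpNorm_nonneg Q (A - B)) fun x => ?_
  rw [← mulVec_mulVec, ← mulVec_mulVec]
  calc _ ≤ qnorm Q ((A - B) *ᵥ ((1 - (1/2 : ℝ) • B)⁻¹ *ᵥ x)) :=
        qnorm_inv_one_sub_mulVec_le hQ hA' _
    _ ≤ qOpNorm Q (A - B) * qnorm Q ((1 - (1/2 : ℝ) • B)⁻¹ *ᵥ x) :=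
        qnorm_mulVec_le_qOpNorm_mul hQ _ _
    _ ≤ qOpNorm Q (A - B) * qnorm Q x :=
        mul_le_mul_of_nonneg_left (qnorm_inv_one_sub_mulVec_le hQ hB' x) (qOpNorm_nonneg Q _)
end

section
/- For any rational function R(z) = D(z)/D(-z), where D is a polynomial with real coefficients such that all zeros of D(-z) are off the imaginary axis, and any antisymmetric-type matrix A ∈ g_Q with Q symmetric positive definite, the matrix D(-A) is invertible; hence R(A) = D(-A)⁻¹D(A) is well-defined and lies in G_Q. -/
/-!
If `QA + AᵀQ = 0` with `Q` positive definite and `Av = μv` for a complex vector `v ≠ 0`, then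
`c = v* Q v` has positive real part and `(μ + μ̄) c = v* (QA + AᵀQ) v = 0`, so the spectrum of `A`
is purely imaginary. By spectral mapping the spectrum of `D(-A)` consists of the values `D(-μ)`,
which are nonzero by hypothesis, so `D(-A)` is invertible. Finally `Q p(A) = p(-A)ᵀ Q` for every
polynomial `p`; for the commuting matrices `N = D(-A)`, `P = D(A)` this gives `PᵀQP = NᵀQN`,
i.e. `N⁻¹P` preserves `Q`.
-/

open Matrix Polynomial

variable {n : Type*} [Fintype n]

theorem SemiconjBy.aeval {R A : Type*} [CommSemiring R] [Semiring A] [Algebra R A] {a x y : A}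
    (h : SemiconjBy a x y) (p : R[X]) : SemiconjBy a (aeval x p) (aeval y p) := by
  induction p using Polynomial.induction_on' with
  | add p q hp hq => simpa only [map_add] using hp.add_right hq
  | monomial k c =>
    simpa only [aeval_monomial] using
      SemiconjBy.mul_right (Algebra.commute_algebraMap_right c a) (h.pow_right k)

theorem Matrix.aeval_transpose [DecidableEq n] {R : Type*} [CommSemiring R] (A : Matrix n n R)
    (p : R[X]) : aeval Aᵀ p = (aeval A p)ᵀ := by
  induction p using Polynomial.induction_on' with
  | add p q hp hq => simp only [map_add, hp, hq, transpose_add]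
  | monomial k c =>
    simp only [aeval_monomial, Algebra.algebraMap_eq_smul_one, smul_mul_assoc, one_mul,
      transpose_smul, transpose_pow]

theorem Matrix.mul_aeval_eq_transpose_aeval_neg_mul [DecidableEq n] {R : Type*} [CommRing R]
    {Q A : Matrix n n R} (hA : Q * A + Aᵀ * Q = 0) (p : R[X]) :
    Q * aeval A p = (aeval (-A) p)ᵀ * Q := by
  have h : SemiconjBy Q A (-A)ᵀ := by
    rw [SemiconjBy, transpose_neg, neg_mul, eq_neg_iff_add_eq_zero, hA]
  rw [← aeval_transpose]
  exact h.aeval p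

theorem Matrix.transpose_nonsing_inv_mul_mul_eq [DecidableEq n] {R : Type*} [CommRing R]
    {N P Q : Matrix n n R} (hN : IsUnit N) (hNP : Commute N P) (hQ : Qᵀ = Q)
    (hQP : Q * P = Nᵀ * Q) : (N⁻¹ * P)ᵀ * Q * (N⁻¹ * P) = Q := by
  obtain ⟨u, rfl⟩ := hN
  have hPQ : Pᵀ * Q = Q * u := by
    simpa only [transpose_mul, transpose_transpose, hQ] using congrArg transpose hQP
  have hform : Pᵀ * Q * P = (u : Matrix n n R)ᵀ * Q * u := by
    rw [hPQ, mul_assoc, hNP.eq, ← mul_assoc, hQP]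
  have hcomm : Commute (↑u⁻¹ : Matrix n n R) P := hNP.units_inv_left
  rw [← coe_units_inv]
  calc (↑u⁻¹ * P)ᵀ * Q * (↑u⁻¹ * P) = (↑u⁻¹ : Matrix n n R)ᵀ * (Pᵀ * Q * P) * ↑u⁻¹ := by
        rw [hcomm.eq, transpose_mul]; noncomm_ring
    _ = (↑u * ↑u⁻¹ : Matrix n n R)ᵀ * Q * (↑u * ↑u⁻¹) := by
        rw [hform, transpose_mul]; noncomm_ring
    _ = Q := by rw [Units.mul_inv, transpose_one, one_mul, mul_one]

theorem Matrix.PosDef.re_star_dotProduct_map_mulVec_pos {Q : Matrix n n ℝ} (hQ : Q.PosDef)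
    {v : n → ℂ} (hv : v ≠ 0) : 0 < (star v ⬝ᵥ (Q.map (algebraMap ℝ ℂ) *ᵥ v)).re := by
  set x : n → ℝ := fun i => (v i).re
  set y : n → ℝ := fun i => (v i).im
  have hsplit :
      (star v ⬝ᵥ (Q.map (algebraMap ℝ ℂ) *ᵥ v)).re = x ⬝ᵥ (Q *ᵥ x) + y ⬝ᵥ (Q *ᵥ y) := by
    simp only [dotProduct, mulVec, Complex.re_sum, Finset.mul_sum, ← Finset.sum_add_distrib]
    refine Finset.sum_congr rfl fun i _ => Finset.sum_congr rfl fun j _ => ?_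
    simp only [x, y, Pi.star_apply, map_apply, Complex.mul_re, Complex.mul_im, RCLike.star_def,
      Complex.conj_re, Complex.conj_im, Complex.coe_algebraMap, Complex.ofReal_re,
      Complex.ofReal_im]
    ring
  have hxy : x ≠ 0 ∨ y ≠ 0 := by
    by_contra! h
    exact hv (funext fun i => Complex.ext (congrFun h.1 i) (congrFun h.2 i))
  have hx : 0 ≤ x ⬝ᵥ (Q *ᵥ x) := by simpa using hQ.posSemidef.dotProduct_mulVec_nonneg x
  have hy : 0 ≤ y ⬝ᵥ (Q *ᵥ y) := by simpa using hQ.posSemidef.dotProduct_mulVec_nonneg y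
  rw [hsplit]
  rcases hxy with h | h
  · have : 0 < x ⬝ᵥ (Q *ᵥ x) := by simpa using hQ.dotProduct_mulVec_pos h
    linarith
  · have : 0 < y ⬝ᵥ (Q *ᵥ y) := by simpa using hQ.dotProduct_mulVec_pos h
    linarith

theorem re_eq_zero_of_mulVec_eq_smul {Q A : Matrix n n ℂ} (hA : Q * A + Aᴴ * Q = 0)
    {v : n → ℂ} {μ : ℂ} (hv : star v ⬝ᵥ (Q *ᵥ v) ≠ 0) (h : A *ᵥ v = μ • v) : μ.re = 0 := by
  have hsum : (μ + star μ) * (star v ⬝ᵥ (Q *ᵥ v)) = 0 :=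
    calc (μ + star μ) * (star v ⬝ᵥ (Q *ᵥ v))
        = star v ⬝ᵥ (Q *ᵥ (A *ᵥ v)) + star (A *ᵥ v) ⬝ᵥ (Q *ᵥ v) := by
          rw [h, mulVec_smul, dotProduct_smul, star_smul, smul_dotProduct, smul_eq_mul,
            smul_eq_mul, add_mul]
      _ = star v ⬝ᵥ ((Q * A + Aᴴ * Q) *ᵥ v) := by
          rw [add_mulVec, dotProduct_add, ← mulVec_mulVec, ← mulVec_mulVec, dotProduct_mulVec,
            star_mulVec, dotProduct_mulVec (star v) Aᴴ]
      _ = 0 := by rw [hA, zero_mulVec, dotProduct_zero]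
  have hconj : μ + star μ = 0 := (mul_eq_zero.mp hsum).resolve_right hv
  rw [RCLike.star_def, Complex.add_conj] at hconj
  have : 2 * μ.re = 0 := by exact_mod_cast hconj
  linarith

theorem re_eq_zero_of_mem_spectrum [DecidableEq n] {Q A : Matrix n n ℝ} (hQ : Q.PosDef)
    (hA : Q * A + Aᵀ * Q = 0) {μ : ℂ} (hμ : μ ∈ spectrum ℂ (A.map (algebraMap ℝ ℂ))) :
    μ.re = 0 := by
  rw [← spectrum_toLin', ← Module.End.hasEigenvalue_iff_mem_spectrum] at hμ
  obtain ⟨v, hv⟩ := hμ.exists_hasEigenvector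
  refine re_eq_zero_of_mulVec_eq_smul (Q := Q.map (algebraMap ℝ ℂ))
    (A := A.map (algebraMap ℝ ℂ)) ?_
    (Complex.ne_zero_of_re_pos (hQ.re_star_dotProduct_map_mulVec_pos hv.2)) ?_
  · have hct : (A.map (algebraMap ℝ ℂ))ᴴ = Aᵀ.map (algebraMap ℝ ℂ) := by
      rw [← conjTranspose_eq_transpose_of_trivial, conjTranspose_map _ (fun _ => by simp)]
    simpa only [map_add, map_mul, map_zero, RingHom.mapMatrix_apply, hct] using
      congrArg (algebraMap ℝ ℂ).mapMatrix hA
  · simpa [Module.End.mem_eigenspace_iff, toLin'_apply] using hv.apply_eq_smul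

theorem isUnit_aeval_of_isRoot_notMem_spectrum {𝕜 A : Type*} [Field 𝕜] [IsAlgClosed 𝕜] [Ring A]
    [Algebra 𝕜 A] {a : A} {p : 𝕜[X]} (hp : p ≠ 0) (h : ∀ μ, p.IsRoot μ → μ ∉ spectrum 𝕜 a) :
    IsUnit (aeval a p) := by
  rcases lt_or_ge 0 p.degree with hdeg | hdeg
  · rw [← spectrum.zero_notMem_iff 𝕜, spectrum.map_polynomial_aeval_of_degree_pos a p hdeg]
    rintro ⟨μ, hμ, hroot⟩
    exact h μ hroot hμ
  · rw [eq_C_of_degree_le_zero hdeg, aeval_C]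
    refine (isUnit_iff_ne_zero.mpr fun h0 => hp ?_).map _
    rw [eq_C_of_degree_le_zero hdeg, h0, map_zero]

theorem Matrix.isUnit_of_isUnit_map [DecidableEq n] {K L : Type*} [Field K] [CommRing L]
    [Nontrivial L] (f : K →+* L) {M : Matrix n n K} (h : IsUnit (M.map f)) : IsUnit M := by
  rw [isUnit_iff_isUnit_det] at h ⊢
  rw [← RingHom.mapMatrix_apply, ← f.map_det] at h
  exact (isUnit_map_iff f _).mp h

theorem Matrix.map_aeval [DecidableEq n] {R S : Type*} [CommSemiring R] [CommSemiring S]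
    [Algebra R S] (A : Matrix n n R) (p : R[X]) :
    (aeval A p).map (algebraMap R S) = aeval (A.map (algebraMap R S)) (p.map (algebraMap R S)) := by
  rw [aeval_map_algebraMap]
  exact (aeval_algHom_apply (AlgHom.mapMatrix (Algebra.ofId R S)) A p).symm

theorem isUnit_aeval_neg [DecidableEq n] {Q A : Matrix n n ℝ} (hQ : Q.PosDef)
    (hA : Q * A + Aᵀ * Q = 0) {D : ℝ[X]}
    (hD : ∀ z : ℂ, aeval (-z) (D.map (algebraMap ℝ ℂ)) = 0 → z.re ≠ 0) :
    IsUnit (aeval (-A) D) := by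
  refine isUnit_of_isUnit_map (algebraMap ℝ ℂ) ?_
  rw [map_aeval, Matrix.map_neg _ (map_neg _)]
  refine isUnit_aeval_of_isRoot_notMem_spectrum (fun h0 => hD 0 (by simp [h0]) rfl) ?_
  intro μ hroot hμ
  rw [← spectrum.neg_eq, Set.mem_neg] at hμ
  exact hD (-μ) (by simpa [coe_aeval_eq_eval] using hroot) (re_eq_zero_of_mem_spectrum hQ hA hμ)

/-- For a real polynomial `D` all of whose "reflected" zeros (zeros of
`z ↦ D(-z)`) avoid the imaginary axis, and `A ∈ g_Q` with `Q` symmetric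
positive definite, `D(-A)` is invertible and `R(A) = D(-A)⁻¹ D(A)` lies in the
quadratic Lie group `G_Q`. -/
theorem stmt10 {n : ℕ} (Q A : Matrix (Fin n) (Fin n) ℝ)
    (hQ : Q.PosDef) (hA : Q * A + Aᵀ * Q = 0)
    (D : Polynomial ℝ)
    (hzeros : ∀ z : ℂ, aeval (-z) (D.map (algebraMap ℝ ℂ)) = 0 → z.re ≠ 0) :
    IsUnit (aeval (-A) D) ∧
    ((aeval (-A) D)⁻¹ * aeval A D)ᵀ * Q * ((aeval (-A) D)⁻¹ * aeval A D) = Q := by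
  have hU : IsUnit (aeval (-A) D) := isUnit_aeval_neg hQ hA hzeros
  have hcomm : Commute (aeval (-A) D) (aeval A D) := by
    rw [show aeval (-A) D = aeval A (D.comp (-X)) by simp [aeval_comp]]
    exact (Commute.all _ _).map _
  have hQsymm : Qᵀ = Q := (conjTranspose_eq_transpose_of_trivial Q).symm.trans hQ.isHermitian
  exact ⟨hU, transpose_nonsing_inv_mul_mul_eq hU hcomm hQsymm
    (mul_aeval_eq_transpose_aeval_neg_mul hA D)⟩
end

section
/- Let H ∈ ℝ^{k×k} be skew-symmetric and let R_s be a diagonal Padé approximant of the exponential, R_s(H) = D_s(-H)⁻¹D_s(H). Then D_s(-H) is invertible and R_s(H) is an orthogonal matrix: R_s(H)ᵀR_s(H) = I. -/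
open Matrix Polynomial

/-- The numerator polynomial `D_s` of the degree-`s` diagonal Padé
approximation of the exponential. -/
noncomputable def padeNum (s : ℕ) : Polynomial ℝ :=
  ∑ j ∈ Finset.range (s + 1),
    C (((s.factorial : ℝ) * ((2 * s - j).factorial : ℝ)) /
        (((2 * s).factorial : ℝ) * (j.factorial : ℝ) * ((s - j).factorial : ℝ))) * X ^ j

noncomputable def Pp (s : ℕ) : Polynomial ℝ :=
  ∑ j ∈ Finset.range (s + 1),
    C (((2 * s - j).factorial : ℝ) / ((j.factorial : ℝ) * ((s - j).factorial : ℝ))) * X ^ j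

lemma Pp_coeff (s n : ℕ) : (Pp s).coeff n =
    if n ≤ s then ((2 * s - n).factorial : ℝ) / ((n.factorial : ℝ) * ((s - n).factorial : ℝ)) else 0 := by
  rw [Pp, finset_sum_coeff]
  simp only [coeff_C_mul, coeff_X_pow, mul_ite, mul_one, mul_zero, eq_comm (a := n)]
  rw [Finset.sum_ite_eq' (Finset.range (s+1)) n]
  simp [Nat.lt_succ_iff]

lemma fact_ne (m : ℕ) : ((m.factorial : ℝ)) ≠ 0 := by
  exact_mod_cast m.factorial_pos.ne'

lemma Pp_rec (s : ℕ) :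
    Pp (s + 2) = C ((2 * (2 * s + 3) : ℕ) : ℝ) * Pp (s + 1) + X ^ 2 * Pp s := by
  ext n
  rw [coeff_add, coeff_C_mul, Pp_coeff, Pp_coeff, mul_comm (X ^ 2) (Pp s),
    coeff_mul_X_pow', Pp_coeff]
  split_ifs with c1 c2 c3 c4 c4' c3' c5 c6 c7
  · -- 2 ≤ n ≤ s+1
    obtain ⟨m, rfl⟩ : ∃ m, n = m + 2 := ⟨n - 2, by omega⟩
    obtain ⟨r, rfl⟩ : ∃ r, s = m + r + 1 := ⟨s - m - 1, by omega⟩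
    have e1 : 2 * (m + r + 1 + 2) - (m + 2) = ((m + 2*r + 2) + 1) + 1 := by omega
    have e2 : m + r + 1 + 2 - (m + 2) = r + 1 := by omega
    have e3 : 2 * (m + r + 1 + 1) - (m + 2) = m + 2*r + 2 := by omega
    have e4 : m + r + 1 + 1 - (m + 2) = r := by omega
    have e5 : m + 2 - 2 = m := by omega
    have e6 : 2 * (m + r + 1) - m = m + 2*r + 2 := by omega
    have e7 : m + r + 1 - m = r + 1 := by omega
    rw [e1, e2, e3, e4, e5, e6, e7, Nat.factorial_succ, Nat.factorial_succ (m + 2*r + 2),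
      Nat.factorial_succ r, show (m+2 : ℕ) = (m+1)+1 from rfl,
      Nat.factorial_succ (m+1), Nat.factorial_succ m]
    field_simp
    push_cast
    ring
  · exact absurd (by omega : n - 2 ≤ s) c4
  · -- n ∈ {0, 1}
    have hn1 : n ≤ 1 := by omega
    interval_cases n
    · have e1 : 2 * (s + 2) - 0 = ((2 * s + 2) + 1) + 1 := by omega
      have e2 : 2 * (s + 1) - 0 = 2 * s + 2 := by omega
      have e3 : (s + 2 - 0) = (s + 1) + 1 := by omega
      have e4 : (s + 1 - 0) = s + 1 := by omega
      rw [e1, e2, e3, e4, Nat.factorial_succ, Nat.factorial_succ ((2*s+2)),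
        Nat.factorial_succ (s+1)]
      field_simp
      push_cast
      ring
    · have e1 : 2 * (s + 2) - 1 = ((2 * s + 1) + 1) + 1 := by omega
      have e2 : 2 * (s + 1) - 1 = 2 * s + 1 := by omega
      have e3 : (s + 2 - 1) = s + 1 := by omega
      have e4 : (s + 1 - 1) = s := by omega
      rw [e1, e2, e3, e4, Nat.factorial_succ, Nat.factorial_succ ((2*s+1)),
        Nat.factorial_succ s]
      field_simp
      push_cast
      ring
  · -- n = s + 2
    have hn : n = s + 2 := by omega
    subst hn
    have e1 : 2 * (s + 2) - (s + 2) = s + 2 := by omega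
    have e2 : s + 2 - (s + 2) = 0 := by omega
    have e5 : s + 2 - 2 = s := by omega
    have e6 : 2 * s - s = s := by omega
    have e7 : s - s = 0 := by omega
    rw [e1, e2, e5, e6, e7]
    simp only [Nat.factorial_zero, Nat.cast_one, mul_one]
    rw [div_self (fact_ne _), div_self (fact_ne _), mul_zero, zero_add]
  all_goals first | omega | simp

lemma Pp_zero : Pp 0 = C 1 := by
  simp [Pp, Nat.factorial]

lemma Pp_one : Pp 1 = C 2 + X := by
  rw [Pp]
  rw [Finset.sum_range_succ, Finset.sum_range_one]
  norm_num [Nat.factorial]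

lemma Wid (s : ℕ) :
    Pp (s + 1) * (Pp s).comp (-X) - (Pp (s + 1)).comp (-X) * Pp s
      = C ((-1 : ℝ) ^ s * 2) * X ^ (2 * s + 1) := by
  induction s with
  | zero =>
    rw [Pp_zero, Pp_one]
    rw [show ((-1:ℝ)^0 * 2) = 2 from by norm_num]
    simp only [add_comp, C_comp, X_comp, C_1, one_comp, one_mul, mul_one]
    rw [map_ofNat C 2]
    ring
  | succ n ih =>
    rw [Pp_rec]
    simp only [add_comp, mul_comp, C_comp, X_comp, pow_comp]
    rw [show (2 * (n+1) + 1) = (2*n+1) + 2 from by ring, pow_succ, pow_succ,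
      pow_succ (-1 : ℝ), show ((-1:ℝ)^n * -1 * 2) = -((-1:ℝ)^n*2) from by ring, map_neg]
    linear_combination (-(X^2) : Polynomial ℝ) * ih

variable {k : ℕ}

lemma aeval_transpose (M : Matrix (Fin k) (Fin k) ℝ) (p : Polynomial ℝ) :
    (aeval M p)ᵀ = aeval Mᵀ p := by
  induction p using Polynomial.induction_on' with
  | add p q hp hq => rw [map_add, map_add, transpose_add, hp, hq]
  | monomial n a =>
    rw [aeval_monomial, aeval_monomial, transpose_mul, transpose_pow]
    rw [Algebra.commutes]
    congr 1
    simp [Algebra.algebraMap_eq_smul_one, transpose_smul]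

lemma aeval_neg_comp (M : Matrix (Fin k) (Fin k) ℝ) (p : Polynomial ℝ) :
    aeval M (p.comp (-X)) = aeval (-M) p := by
  rw [aeval_comp]; simp

lemma aeval_commute (M : Matrix (Fin k) (Fin k) ℝ) (p q : Polynomial ℝ) :
    aeval M p * aeval (-M) q = aeval (-M) q * aeval M p := by
  rw [← aeval_neg_comp, ← _root_.map_mul, ← _root_.map_mul, mul_comm]

lemma skew_pow_desc (H : Matrix (Fin k) (Fin k) ℝ) (hH : Hᵀ = -H) :
    ∀ (n : ℕ) (x : Fin k → ℝ), (H ^ (n + 1)).mulVec x = 0 → H.mulVec x = 0 := by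
  intro n
  induction n with
  | zero => intro x hx; rwa [pow_one] at hx
  | succ n ih =>
    intro x hx
    apply ih
    have h0 : (H ^ (n + 1)).mulVec x ⬝ᵥ (H ^ (n + 1)).mulVec x = 0 := by
      rw [dotProduct_mulVec, ← mulVec_transpose, mulVec_mulVec, transpose_pow, hH,
        neg_pow]
      have e : (n + 1) + (n + 1) = n + (n + 2) := by omega
      rw [mul_assoc, ← pow_add, e, pow_add H n (n + 2), ← mul_assoc,
        ← mulVec_mulVec, hx, mulVec_zero, zero_dotProduct]
    rw [dotProduct_self_eq_zero] at h0
    exact h0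

lemma aeval_mulVec_of_ker (M : Matrix (Fin k) (Fin k) ℝ) (x : Fin k → ℝ)
    (hx : M.mulVec x = 0) (p : Polynomial ℝ) :
    (aeval M p).mulVec x = p.coeff 0 • x := by
  induction p using Polynomial.induction_on' with
  | add p q hp hq => rw [map_add, add_mulVec, hp, hq, coeff_add, add_smul]
  | monomial n a =>
    rw [aeval_monomial, coeff_monomial]
    rcases Nat.eq_zero_or_pos n with rfl | hn
    · simp [Algebra.algebraMap_eq_smul_one, smul_mulVec]
    · rw [if_neg hn.ne', zero_smul]
      obtain ⟨m, rfl⟩ : ∃ m, n = m + 1 := ⟨n - 1, by omega⟩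
      rw [pow_succ, ← mul_assoc, ← mulVec_mulVec, hx, mulVec_zero]


lemma pade_ker (H : Matrix (Fin k) (Fin k) ℝ) (hH : Hᵀ = -H) (s : ℕ) (x : Fin k → ℝ)
    (hx : (aeval (-H) (Pp s)).mulVec x = 0) : x = 0 := by
  have hB : (aeval H (Pp s)).mulVec x = 0 := by
    have h0 : (aeval H (Pp s)).mulVec x ⬝ᵥ (aeval H (Pp s)).mulVec x = 0 := by
      rw [dotProduct_mulVec, ← mulVec_transpose, mulVec_mulVec, aeval_transpose, hH,
        ← aeval_commute H (Pp s) (Pp s), ← mulVec_mulVec, hx, mulVec_zero,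
        zero_dotProduct]
    rwa [dotProduct_self_eq_zero] at h0
  have key : aeval H (Pp (s+1)) * aeval (-H) (Pp s)
      - aeval (-H) (Pp (s+1)) * aeval H (Pp s) = ((-1:ℝ)^s * 2) • H^(2*s+1) := by
    have h := congrArg (aeval H (R := ℝ)) (Wid s)
    rw [map_sub, _root_.map_mul, _root_.map_mul, aeval_neg_comp, aeval_neg_comp,
      _root_.map_mul, aeval_C, aeval_X_pow, Algebra.algebraMap_eq_smul_one,
      smul_mul_assoc, one_mul] at h
    exact h
  have h2 : (((-1:ℝ)^s * 2) • H^(2*s+1)).mulVec x = 0 := by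
    rw [← key, sub_mulVec, ← mulVec_mulVec, ← mulVec_mulVec, hx, hB, mulVec_zero,
      mulVec_zero, sub_zero]
  have h3 : (H^(2*s+1)).mulVec x = 0 := by
    rw [smul_mulVec] at h2
    exact (smul_eq_zero.mp h2).resolve_left
      (mul_ne_zero (pow_ne_zero _ (by norm_num)) two_ne_zero)
  have h4 : H.mulVec x = 0 := skew_pow_desc H hH (2*s) x h3
  have h5 := aeval_mulVec_of_ker (-H) x (by rw [neg_mulVec, h4, neg_zero]) (Pp s)
  rw [hx, Pp_coeff, if_pos (Nat.zero_le s)] at h5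
  have hc : (((2*s - 0).factorial : ℝ) / ((Nat.factorial 0 : ℝ) * ((s-0).factorial : ℝ))) ≠ 0 := by
    apply div_ne_zero (fact_ne _) (mul_ne_zero (fact_ne _) (fact_ne _))
  have := (smul_eq_zero.mp h5.symm).resolve_left hc
  exact this

lemma padeNum_eq (s : ℕ) :
    padeNum s = C ((s.factorial : ℝ) / ((2*s).factorial : ℝ)) * Pp s := by
  rw [padeNum, Pp, Finset.mul_sum]
  refine Finset.sum_congr rfl fun j hj => ?_
  rw [← mul_assoc, ← C_mul]
  congr 1
  field_simp

lemma Pp_unit (H : Matrix (Fin k) (Fin k) ℝ) (hH : Hᵀ = -H) (s : ℕ) :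
    IsUnit (aeval (-H) (Pp s)) := by
  rw [Matrix.isUnit_iff_isUnit_det, isUnit_iff_ne_zero]
  intro h
  obtain ⟨v, hv, hv0⟩ := (Matrix.exists_mulVec_eq_zero_iff).mpr h
  exact hv (pade_ker H hH s v hv0)

lemma padeNum_unit (H : Matrix (Fin k) (Fin k) ℝ) (hH : Hᵀ = -H) (s : ℕ) :
    IsUnit (aeval (-H) (padeNum s)) := by
  rw [padeNum_eq, _root_.map_mul, aeval_C]
  refine IsUnit.mul ?_ (Pp_unit H hH s)
  refine (algebraMap ℝ (Matrix (Fin k) (Fin k) ℝ)).isUnit_map ?_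
  rw [isUnit_iff_ne_zero]
  exact div_ne_zero (fact_ne _) (fact_ne _)

/-- For skew-symmetric `H`, `D_s(-H)` is invertible and the diagonal Padé
approximant `R_s(H) = D_s(-H)⁻¹ D_s(H)` is an orthogonal matrix. -/
theorem stmt12 {k : ℕ} (H : Matrix (Fin k) (Fin k) ℝ) (hH : Hᵀ = -H) (s : ℕ) :
    IsUnit (aeval (-H) (padeNum s)) ∧
    ((aeval (-H) (padeNum s))⁻¹ * aeval H (padeNum s))ᵀ *
      ((aeval (-H) (padeNum s))⁻¹ * aeval H (padeNum s)) = 1 := by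
  have hHn : (-H)ᵀ = -(-H) := by rw [transpose_neg, hH, neg_neg]
  set A := aeval (-H) (padeNum s) with hAdef
  set B := aeval H (padeNum s) with hBdef
  have hA : IsUnit A := padeNum_unit H hH s
  have hB : IsUnit B := by
    have := padeNum_unit (-H) hHn s
    rwa [neg_neg] at this
  have hAt : Aᵀ = B := by rw [hAdef, aeval_transpose, transpose_neg, hH, neg_neg]
  have hBt : Bᵀ = A := by rw [hBdef, aeval_transpose, hH]
  have comm : A * B = B * A := (aeval_commute H (padeNum s) (padeNum s)).symm
  have hdA : IsUnit A.det := (Matrix.isUnit_iff_isUnit_det A).mp hA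
  have hdB : IsUnit B.det := (Matrix.isUnit_iff_isUnit_det B).mp hB
  refine ⟨hA, ?_⟩
  have e1 : B⁻¹ * A⁻¹ = A⁻¹ * B⁻¹ := by
    rw [← Matrix.mul_inv_rev, ← Matrix.mul_inv_rev, comm]
  rw [transpose_mul, transpose_nonsing_inv, hAt, hBt]
  calc A * B⁻¹ * (A⁻¹ * B) = A * (B⁻¹ * A⁻¹) * B := by
        rw [← mul_assoc, mul_assoc A B⁻¹ A⁻¹]
    _ = A * (A⁻¹ * B⁻¹) * B := by rw [e1]
    _ = (A * A⁻¹) * (B⁻¹ * B) := by rw [← mul_assoc A A⁻¹ B⁻¹, mul_assoc]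
    _ = 1 := by rw [Matrix.mul_nonsing_inv A hdA, Matrix.nonsing_inv_mul B hdB, one_mul]
end
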